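/- Suppose q : ℕ → ℝ is non-decreasing with q_k ≥ 0 for all k and q_0 > 0, and that A > 0 satisfies n·q_{n-1} ≤ A·Q_n for all n ≥ 1. Then for every f ∈ L¹(G_m,μ), every n ≥ 1 and every x ∈ G_m, |T_n f(x)| ≤ 2A·σ*f(x); consequently T*f(x) ≤ 2A·σ*f(x) for every x ∈ G_m. -/

import Mathlib

open MeasureTheory Complex Finset ENNReal

noncomputable section

namespace VilenkinT

variable (m : ℕ → ℕ)

/-- The generalized powers `M_0 = 1`, `M_{k+1} = m_k M_k`. -/
def Mgen : ℕ → ℕ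
  | 0 => 1
  | k + 1 => m k * Mgen k

/-- The Vilenkin group (as a measurable space of coordinate sequences). -/
abbrev G := ∀ k : ℕ, Fin (m k)

/-- The `j`-th digit of `n` in the generalized number system based on `m`. -/
def digit (n j : ℕ) : ℕ := n / Mgen m j % m j

/-- The Vilenkin system `ψ_n(x) = ∏_k exp(2πi n_k x_k / m_k)`. -/
def psi (n : ℕ) (x : G m) : ℂ :=
  ∏' k : ℕ, Complex.exp (2 * Real.pi * Complex.I * (digit m n k : ℂ) * ((x k : ℕ) : ℂ) / (m k : ℂ))

/-- Partial sums of the Vilenkin–Fourier series built from coefficients `fhat`. -/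
def partialSum (fhat : ℕ → ℂ) (n : ℕ) (x : G m) : ℂ :=
  ∑ k ∈ Finset.range n, fhat k * psi m k x

/-- `Q_n := ∑_{k=0}^{n-1} q_k`. -/
def Qsum (q : ℕ → ℝ) (n : ℕ) : ℝ := ∑ k ∈ Finset.range n, q k

/-- The `T`-means `T_n f = (1/Q_n) ∑_{k=0}^{n-1} q_k S_k f`. -/
def Tmean (q : ℕ → ℝ) (fhat : ℕ → ℂ) (n : ℕ) (x : G m) : ℂ :=
  (1 / (Qsum q n : ℂ)) * ∑ k ∈ Finset.range n, (q k : ℂ) * partialSum m fhat k x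

/-- The maximal operator `T^* f = sup_{n ≥ 1} |T_n f|` (with values in `ℝ≥0∞`). -/
def Tstar (q : ℕ → ℝ) (fhat : ℕ → ℂ) (x : G m) : ℝ≥0∞ :=
  ⨆ (n : ℕ) (_ : 1 ≤ n), ENNReal.ofReal ((‖·‖) (Tmean m q fhat n x))

/-- The weak-`L_p` norm `sup_{t>0} t μ(g > t)^{1/p}` of an `ℝ≥0∞`-valued function. -/
def weakNorm (μ : Measure (G m)) (p : ℝ) (g : G m → ℝ≥0∞) : ℝ≥0∞ :=
  ⨆ (t : ℝ) (_ : 0 < t), ENNReal.ofReal t * (μ {x | ENNReal.ofReal t < g x}) ^ (1 / p)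

/-- The weak-`L_p` norm of a complex valued function. -/
def weakNormC (μ : Measure (G m)) (p : ℝ) (g : G m → ℂ) : ℝ≥0∞ :=
  weakNorm m μ p fun x => ENNReal.ofReal ((‖·‖) (g x))

/-- `μ` is the product of the uniform probability measures on the coordinates:
it is a probability measure giving each cylinder of length `n` measure `1/M_n`. -/
def IsHaar (μ : Measure (G m)) : Prop :=
  IsProbabilityMeasure μ ∧
    ∀ (n : ℕ) (x : G m), μ {y | ∀ i < n, y i = x i} = ((Mgen m n : ℝ≥0∞))⁻¹

/-- The σ-algebra generated by the first `n` coordinates. -/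
def coordMS (n : ℕ) : MeasurableSpace (G m) :=
  MeasurableSpace.comap (fun x (i : Fin n) => x i) inferInstance

/-- `f = (f^{(n)})` is a martingale with respect to the filtration of coordinate σ-algebras. -/
def IsVMartingale (μ : Measure (G m)) (f : ℕ → G m → ℂ) : Prop :=
  (∀ n, Integrable (f n) μ) ∧ (∀ n, StronglyMeasurable[coordMS m n] (f n)) ∧
    ∀ n, μ[f (n + 1)|coordMS m n] =ᵐ[μ] f n

/-- `fhat` is the coefficient function of the martingale `f`. -/
def IsCoeff (μ : Measure (G m)) (f : ℕ → G m → ℂ) (fhat : ℕ → ℂ) : Prop :=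
  ∀ k i, i < Mgen m k → fhat i = ∫ x, f k x * (starRingEnd ℂ) (psi m i x) ∂μ

/-- The martingale Hardy space (quasi-)norm `‖f‖_{H_p} = (∫ (sup_n |f^{(n)}|)^p dμ)^{1/p}`. -/
def HardyNorm (μ : Measure (G m)) (p : ℝ) (f : ℕ → G m → ℂ) : ℝ≥0∞ :=
  (∫⁻ x, (⨆ n, ENNReal.ofReal ((‖·‖) (f n x))) ^ p ∂μ) ^ (1 / p)

/-- The Vilenkin–Fourier coefficients of an integrable function. -/
def fourierCoeff (μ : Measure (G m)) (f : G m → ℂ) (n : ℕ) : ℂ :=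
  ∫ x, f x * (starRingEnd ℂ) (psi m n x) ∂μ

/-- The Fejér means `σ_n f = (1/n) ∑_{k=1}^n S_k f`. -/
def sigmaMean (fhat : ℕ → ℂ) (n : ℕ) (x : G m) : ℂ :=
  (1 / (n : ℂ)) * ∑ k ∈ Finset.Icc 1 n, partialSum m fhat k x

/-- The maximal Fejér operator `σ^* f = sup_{n ≥ 1} |σ_n f|`. -/
def sigmaStar (fhat : ℕ → ℂ) (x : G m) : ℝ≥0∞ :=
  ⨆ (n : ℕ) (_ : 1 ≤ n), ENNReal.ofReal ((‖·‖) (sigmaMean m fhat n x))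

/-- `l_n := ∑_{k=1}^{n-1} 1/k`. -/
def lsum (n : ℕ) : ℝ := ∑ k ∈ Finset.Icc 1 (n - 1), (1 : ℝ) / k

/-- The Riesz logarithmic means `R_n f = (1/l_n) ∑_{k=1}^{n-1} S_k f / k`. -/
def Riesz (fhat : ℕ → ℂ) (n : ℕ) (x : G m) : ℂ :=
  (1 / (lsum n : ℂ)) * ∑ k ∈ Finset.Icc 1 (n - 1), partialSum m fhat k x / (k : ℂ)

/-- The maximal Riesz operator `R^* f = sup_{n ≥ 2} |R_n f|`. -/
def RieszStar (fhat : ℕ → ℂ) (x : G m) : ℝ≥0∞ :=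
  ⨆ (n : ℕ) (_ : 2 ≤ n), ENNReal.ofReal ((‖·‖) (Riesz m fhat n x))

/-- The Cesàro numbers `A_n^α = ∏_{j=1}^n (α+j)/j`. -/
def Aces (α : ℝ) (n : ℕ) : ℝ := ∏ j ∈ Finset.Icc 1 n, (α + j) / j

/-- The means `U_n^α f = (1/A_n^α) ∑_{k=0}^{n-1} A_k^{α-1} S_k f`. -/
def Umean (α : ℝ) (fhat : ℕ → ℂ) (n : ℕ) (x : G m) : ℂ :=
  (1 / (Aces α n : ℂ)) * ∑ k ∈ Finset.range n, (Aces (α - 1) k : ℂ) * partialSum m fhat k x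

/-- The maximal operator `U^{α,*} f = sup_{n ≥ 1} |U_n^α f|`. -/
def Ustar (α : ℝ) (fhat : ℕ → ℂ) (x : G m) : ℝ≥0∞ :=
  ⨆ (n : ℕ) (_ : 1 ≤ n), ENNReal.ofReal ((‖·‖) (Umean m α fhat n x))

/-- The weights `q_0 = 1`, `q_k = k^{α-1}` generating the means `V_n^α`. -/
def qV (α : ℝ) (k : ℕ) : ℝ := if k = 0 then 1 else (k : ℝ) ^ (α - 1)

/-- The weights `q_k = max(0, log^{(β)}(k^α))` generating the means `B_n^{α,β}`. -/
def qB (α : ℝ) (β : ℕ) (k : ℕ) : ℝ := max 0 (Real.log^[β] ((k : ℝ) ^ α))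

/-- The maximal operator `B^{α,β,*} f = sup_{n : Q_n > 0} |B_n^{α,β} f|`. -/
def Bstar (α : ℝ) (β : ℕ) (fhat : ℕ → ℂ) (x : G m) : ℝ≥0∞ :=
  ⨆ (n : ℕ) (_ : 0 < Qsum (qB α β) n), ENNReal.ofReal ((‖·‖) (Tmean m (qB α β) fhat n x))

open Classical in
/-- The coefficient function `ĉ` of the counterexample martingale:
`ĉ(v) = M_{α_k}^{1/p-1}/α_k` for `M_{α_k} ≤ v < M_{α_k + 1}`, and `0` otherwise. -/
def chat (p : ℝ) (a : ℕ → ℕ) (v : ℕ) : ℝ :=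
  if h : ∃ k, Mgen m (a k) ≤ v ∧ v < Mgen m (a k + 1) then
    (Mgen m (a h.choose) : ℝ) ^ (1 / p - 1) / (a h.choose : ℝ)
  else 0

/-! Summation by parts writes `∑_{k<n} q_k S_k f` as `q_{n-1} (n-1) σ_{n-1} f` minus
`∑_{i<n-1} (q_{i+1} - q_i) i σ_i f`. For non-decreasing `q` the increments are nonnegative and
telescope to at most `q_{n-1}`, so the whole sum is at most `2 n q_{n-1} σ^* f ≤ 2 A Q_n σ^* f`. -/

theorem _root_.Monotone.norm_sum_range_smul_le {E : Type*} [SeminormedAddCommGroup E]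
    [NormedSpace ℝ E] {q : ℕ → ℝ} (hmono : Monotone q) (hq0 : 0 ≤ q 0) {a : ℕ → E} {C : ℝ}
    {n : ℕ} (ha : ∀ k ≤ n, ‖∑ j ∈ range k, a j‖ ≤ C) :
    ‖∑ k ∈ range n, q k • a k‖ ≤ 2 * q (n - 1) * C := by
  have hC : 0 ≤ C := (norm_nonneg _).trans (ha 0 n.zero_le)
  have hqn : q 0 ≤ q (n - 1) := hmono (Nat.zero_le _)
  have hlast : ‖q (n - 1) • ∑ j ∈ range n, a j‖ ≤ q (n - 1) * C := by
    rw [norm_smul, Real.norm_of_nonneg (hq0.trans hqn)]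
    exact mul_le_mul_of_nonneg_left (ha n le_rfl) (hq0.trans hqn)
  have hincr : ‖∑ i ∈ range (n - 1), (q (i + 1) - q i) • ∑ j ∈ range (i + 1), a j‖ ≤
      (q (n - 1) - q 0) * C := by
    calc _ ≤ ∑ i ∈ range (n - 1), (q (i + 1) - q i) * C := by
          refine norm_sum_le_of_le _ fun i hi => ?_
          have hstep : 0 ≤ q (i + 1) - q i := sub_nonneg.mpr (hmono i.le_succ)
          rw [norm_smul, Real.norm_of_nonneg hstep]
          exact mul_le_mul_of_nonneg_left (ha _ (by grind)) hstep
      _ = (q (n - 1) - q 0) * C := by rw [← sum_mul, sum_range_sub q]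
  calc _ ≤ q (n - 1) * C + (q (n - 1) - q 0) * C := by
        rw [sum_range_by_parts]
        exact (norm_sub_le _ _).trans (add_le_add hlast hincr)
    _ ≤ 2 * q (n - 1) * C := by nlinarith

/-- `S_0 f = 0`, so the first `i + 1` partial sums are the `i` summed in `σ_i f`. -/
theorem sum_range_succ_partialSum (fhat : ℕ → ℂ) (i : ℕ) (x : G m) :
    ∑ j ∈ range (i + 1), partialSum m fhat j x = i * sigmaMean m fhat i x := by
  rcases Nat.eq_zero_or_pos i with rfl | hi
  · simp [partialSum]
  · rw [sigmaMean, ← mul_assoc, mul_one_div_cancel (Nat.cast_ne_zero.mpr hi.ne'), one_mul,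
      range_eq_Ico, sum_eq_sum_Ico_succ_bot (Nat.succ_pos i)]
    simp [partialSum, Ico_add_one_right_eq_Icc]

theorem norm_sum_range_partialSum_le {fhat : ℕ → ℂ} {x : G m} {B : ℝ} (hB0 : 0 ≤ B)
    (hB : ∀ i, 1 ≤ i → ‖sigmaMean m fhat i x‖ ≤ B) {k n : ℕ} (hk : k ≤ n) :
    ‖∑ j ∈ range k, partialSum m fhat j x‖ ≤ n * B := by
  rcases k with _ | i
  · simpa using mul_nonneg n.cast_nonneg hB0
  rw [sum_range_succ_partialSum, norm_mul, Complex.norm_natCast]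
  rcases Nat.eq_zero_or_pos i with rfl | hi
  · simpa using mul_nonneg n.cast_nonneg hB0
  exact mul_le_mul (by exact_mod_cast (Nat.le_succ i).trans hk) (hB i hi) (norm_nonneg _)
    n.cast_nonneg

theorem norm_Tmean_le {q : ℕ → ℝ} (hq : ∀ k, 0 ≤ q k) (hmono : Monotone q) {A : ℝ}
    (hA : 0 ≤ A) {n : ℕ} (hAq : (n : ℝ) * q (n - 1) ≤ A * Qsum q n) {fhat : ℕ → ℂ} {x : G m}
    {B : ℝ} (hB0 : 0 ≤ B) (hB : ∀ i, 1 ≤ i → ‖sigmaMean m fhat i x‖ ≤ B) :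
    ‖Tmean m q fhat n x‖ ≤ 2 * A * B := by
  have hQ : 0 ≤ Qsum q n := sum_nonneg fun k _ => hq k
  have hsum : ‖∑ k ∈ range n, q k • partialSum m fhat k x‖ ≤ 2 * A * B * Qsum q n :=
    calc _ ≤ 2 * q (n - 1) * (n * B) :=
          hmono.norm_sum_range_smul_le (hq 0) fun k hk => norm_sum_range_partialSum_le m hB0 hB hk
      _ = 2 * B * (n * q (n - 1)) := by ring
      _ ≤ 2 * A * B * Qsum q n := by nlinarith
  rw [Tmean, norm_mul, one_div, norm_inv, Complex.norm_real, Real.norm_of_nonneg hQ,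
    inv_mul_eq_div]
  simp only [← Complex.real_smul]
  exact div_le_of_le_mul₀ hQ (by positivity) hsum

theorem ofReal_norm_Tmean_le_sigmaStar {q : ℕ → ℝ} (hq : ∀ k, 0 ≤ q k) (hmono : Monotone q)
    {A : ℝ} (hA : 0 < A) {n : ℕ} (hAq : (n : ℝ) * q (n - 1) ≤ A * Qsum q n) (fhat : ℕ → ℂ)
    (x : G m) :
    ENNReal.ofReal ‖Tmean m q fhat n x‖ ≤ ENNReal.ofReal (2 * A) * sigmaStar m fhat x := by
  by_cases htop : sigmaStar m fhat x = ⊤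
  · simp [htop, ENNReal.mul_top, hA]
  have hB : ∀ i, 1 ≤ i → ‖sigmaMean m fhat i x‖ ≤ (sigmaStar m fhat x).toReal := fun i hi =>
    (ENNReal.ofReal_le_iff_le_toReal htop).mp
      (le_iSup₂ (f := fun i (_ : 1 ≤ i) => ENNReal.ofReal ‖sigmaMean m fhat i x‖) i hi)
  calc _ ≤ ENNReal.ofReal (2 * A * (sigmaStar m fhat x).toReal) :=
        ENNReal.ofReal_le_ofReal (norm_Tmean_le m hq hmono hA.le hAq ENNReal.toReal_nonneg hB)
    _ = ENNReal.ofReal (2 * A) * sigmaStar m fhat x := by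
        rw [ENNReal.ofReal_mul (by positivity), ENNReal.ofReal_toReal htop]

theorem Tmean_le_sigmaStar_nondecreasing_general
    (m : ℕ → ℕ)
    (μ : Measure (G m))
    (q : ℕ → ℝ) (hq : ∀ k, 0 ≤ q k) (hmono : Monotone q)
    (A : ℝ) (hA : 0 < A) (hAq : ∀ n : ℕ, 1 ≤ n → (n : ℝ) * q (n - 1) ≤ A * Qsum q n)
    (f : G m → ℂ) :
    (∀ n : ℕ, 1 ≤ n → ∀ x : G m,
        ENNReal.ofReal ((‖·‖) (Tmean m q (fourierCoeff m μ f) n x)) ≤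
          ENNReal.ofReal (2 * A) * sigmaStar m (fourierCoeff m μ f) x) ∧
      ∀ x : G m, Tstar m q (fourierCoeff m μ f) x ≤
        ENNReal.ofReal (2 * A) * sigmaStar m (fourierCoeff m μ f) x := by
  have hTn : ∀ n : ℕ, 1 ≤ n → ∀ x : G m,
      ENNReal.ofReal ‖Tmean m q (fourierCoeff m μ f) n x‖ ≤
        ENNReal.ofReal (2 * A) * sigmaStar m (fourierCoeff m μ f) x := fun n hn x =>
    ofReal_norm_Tmean_le_sigmaStar m hq hmono hA (hAq n hn) _ x
  exact ⟨hTn, fun x => iSup₂_le fun n hn => hTn n hn x⟩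

/-- For a non-decreasing nonnegative weight sequence `q` with `q 0 > 0`
satisfying `n q_{n-1} ≤ A Q_n` and any integrable `f`, one has `|T_n f| ≤ 2A σ^* f` pointwise
for all `n ≥ 1`, hence `T^* f ≤ 2A σ^* f`. -/
theorem Tmean_le_sigmaStar_nondecreasing
    (m : ℕ → ℕ) (hm : ∀ k, 2 ≤ m k) (hbdd : ∃ Λ : ℕ, ∀ k, m k ≤ Λ)
    (μ : Measure (G m)) (hμ : IsHaar m μ)
    (q : ℕ → ℝ) (hq : ∀ k, 0 ≤ q k) (hq0 : 0 < q 0) (hmono : Monotone q)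
    (A : ℝ) (hA : 0 < A) (hAq : ∀ n : ℕ, 1 ≤ n → (n : ℝ) * q (n - 1) ≤ A * Qsum q n)
    (f : G m → ℂ) (hf : Integrable f μ) :
    (∀ n : ℕ, 1 ≤ n → ∀ x : G m,
        ENNReal.ofReal ((‖·‖) (Tmean m q (fourierCoeff m μ f) n x)) ≤
          ENNReal.ofReal (2 * A) * sigmaStar m (fourierCoeff m μ f) x) ∧
      ∀ x : G m, Tstar m q (fourierCoeff m μ f) x ≤
        ENNReal.ofReal (2 * A) * sigmaStar m (fourierCoeff m μ f) x :=
  Tmean_le_sigmaStar_nondecreasing_general m μ q hq hmono A hA hAq f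

end VilenkinT
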